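/- Assume the Setup. Let U ⊆ M be a k-subspace for which there exists s ∈ S with s·U₀ ⊆ U and s·U ⊆ U₀. If L₁, L₂ ∈ A both satisfy condition (2) and both satisfy L₁·U ⊆ U and L₂·U ⊆ U, then L₁ = L₂. -/

import Mathlib

/-!
The ad-degree `deg = deg_{L₀}` is additive on nonzero elements of the domain `B` (top term of the
Leibniz expansion, char. zero), so it extends to an additive, ultrametric degree on `A` by
`deg (s⁻¹ b) = deg b - deg s`. Condition (2) says `deg (L - L₀) < 0`, hence `D = L₁ - L₂` has
negative degree if `D ≠ 0`. But `D` preserves `U`, so every `s Dⁿ s` lies in `B` and has degree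
`2 deg s + n deg D ≥ 0`, which fails for large `n`.
-/
/-- `adOp a b x = a*x - x*b`, the operator `ad_{a,b}`. -/
def adOp {A : Type*} [Ring A] (a b : A) : A → A := fun x => a * x - x * b

/-- The ad-nilpotency degree of `b` with respect to `L₀`:
the smallest `n` with `ad_{L₀}^[n+1] b = 0`. -/
noncomputable def degAd {A : Type*} [Ring A] (L₀ b : A) : ℕ :=
  sInf {n : ℕ | (adOp L₀ L₀)^[n + 1] b = 0}

/-- Condition (2) of Theorem 4.4: `L = L₀` or `deg(L - L₀) < 0`, expressed via some `s' ∈ S`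
with `s'(L - L₀)` a nonzero element of `B` of `ad_{L₀}`-degree smaller than that of `s'`. -/
def cond2 {k A : Type*} [CommSemiring k] [Ring A] [Algebra k A]
    (B : Subalgebra k A) (S : Set A) (L₀ L : A) : Prop :=
  L = L₀ ∨ ∃ s' ∈ S, s' * (L - L₀) ∈ B ∧ s' * (L - L₀) ≠ 0 ∧
    degAd L₀ (s' * (L - L₀)) < degAd L₀ s'

/-- A `k`-subspace of the `A`-module `M` (with `k` acting through `algebraMap k A`). -/
def isSubspace (k A : Type*) {M : Type*} [CommSemiring k] [Ring A] [Algebra k A]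
    [AddCommGroup M] [Module A M] (U : Set M) : Prop :=
  (0 : M) ∈ U ∧ (∀ u ∈ U, ∀ v ∈ U, u + v ∈ U) ∧
    (∀ c : k, ∀ u ∈ U, (algebraMap k A c) • u ∈ U)

open Finset

section AdDegree

variable {A : Type*} [Ring A] {L₀ x y : A}

def adHom (L₀ : A) : A →+ A := AddMonoidHom.mulLeft L₀ - AddMonoidHom.mulRight L₀

theorem coe_adHom (L₀ : A) : ⇑(adHom L₀) = adOp L₀ L₀ := rfl

theorem adOp_mul (L₀ x y : A) : adOp L₀ L₀ (x * y) = adOp L₀ L₀ x * y + x * adOp L₀ L₀ y := by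
  simp only [adOp, sub_mul, mul_sub, mul_assoc]
  abel

theorem adOp_iterate_mul (L₀ x y : A) (n : ℕ) :
    (adOp L₀ L₀)^[n] (x * y) = ∑ ij ∈ antidiagonal n,
      n.choose ij.1 • ((adOp L₀ L₀)^[ij.1] x * (adOp L₀ L₀)^[ij.2] y) := by
  induction n with
  | zero => simp
  | succ n ih =>
    rw [sum_antidiagonal_choose_succ_nsmul (M := A)
      (fun i j => (adOp L₀ L₀)^[i] x * (adOp L₀ L₀)^[j] y) n,
      Function.iterate_succ_apply', ih, ← coe_adHom, map_sum]
    simp only [map_nsmul, coe_adHom, adOp_mul, ← Function.iterate_succ_apply' (adOp L₀ L₀),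
      smul_add, sum_add_distrib, add_comm]
    congr 1
    refine sum_congr rfl fun ij hij => ?_
    rw [n.choose_symm_of_eq_add (HasAntidiagonal.mem_antidiagonal.1 hij).symm]

theorem adOp_iterate_sub (L₀ x y : A) (n : ℕ) :
    (adOp L₀ L₀)^[n] (x - y) = (adOp L₀ L₀)^[n] x - (adOp L₀ L₀)^[n] y := by
  rw [← coe_adHom]; exact iterate_map_sub (adHom L₀) n x y

theorem adOp_iterate_neg (L₀ x : A) (n : ℕ) :
    (adOp L₀ L₀)^[n] (-x) = -(adOp L₀ L₀)^[n] x := by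
  rw [← coe_adHom]; exact iterate_map_neg (adHom L₀) n x

theorem adOp_iterate_eq_zero_of_le {m n : ℕ} (h : (adOp L₀ L₀)^[m] x = 0) (hmn : m ≤ n) :
    (adOp L₀ L₀)^[n] x = 0 := by
  obtain ⟨r, rfl⟩ := Nat.exists_eq_add_of_le hmn
  rw [add_comm, Function.iterate_add_apply, h]
  exact Function.iterate_fixed (by simp [adOp]) r

theorem degAd_le_of_adOp_iterate {n : ℕ} (h : (adOp L₀ L₀)^[n + 1] x = 0) : degAd L₀ x ≤ n :=
  Nat.sInf_le h

theorem adOp_iterate_degAd_succ (hx : ∃ n, (adOp L₀ L₀)^[n] x = 0) :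
    (adOp L₀ L₀)^[degAd L₀ x + 1] x = 0 := by
  obtain ⟨n, hn⟩ := hx
  exact Nat.sInf_mem (s := {n | (adOp L₀ L₀)^[n + 1] x = 0})
    ⟨n, adOp_iterate_eq_zero_of_le hn n.le_succ⟩

theorem adOp_iterate_degAd_ne_zero (hx : x ≠ 0) : (adOp L₀ L₀)^[degAd L₀ x] x ≠ 0 := by
  rcases hd : degAd L₀ x with _ | m
  · exact hx
  · exact Nat.notMem_of_lt_sInf (s := {n | (adOp L₀ L₀)^[n + 1] x = 0})
      (by rw [← degAd, hd]; omega)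

theorem degAd_eq_of_adOp_iterate {m : ℕ} (h : (adOp L₀ L₀)^[m + 1] x = 0)
    (h' : (adOp L₀ L₀)^[m] x ≠ 0) : degAd L₀ x = m := by
  refine le_antisymm (degAd_le_of_adOp_iterate h) (not_lt.1 fun hlt => h' ?_)
  exact adOp_iterate_eq_zero_of_le (adOp_iterate_degAd_succ ⟨_, h⟩) hlt

theorem degAd_neg (x : A) : degAd L₀ (-x) = degAd L₀ x := by
  simp only [degAd, adOp_iterate_neg, neg_eq_zero]

theorem degAd_sub_le (hx : ∃ n, (adOp L₀ L₀)^[n] x = 0) (hy : ∃ n, (adOp L₀ L₀)^[n] y = 0) :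
    degAd L₀ (x - y) ≤ max (degAd L₀ x) (degAd L₀ y) := by
  refine degAd_le_of_adOp_iterate ?_
  rw [adOp_iterate_sub, adOp_iterate_eq_zero_of_le (adOp_iterate_degAd_succ hx) (by omega),
    adOp_iterate_eq_zero_of_le (adOp_iterate_degAd_succ hy) (by omega), sub_zero]

theorem degAd_mul [IsDomain A] [CharZero A] (hx0 : x ≠ 0) (hy0 : y ≠ 0)
    (hx : ∃ n, (adOp L₀ L₀)^[n] x = 0) (hy : ∃ n, (adOp L₀ L₀)^[n] y = 0) :
    degAd L₀ (x * y) = degAd L₀ x + degAd L₀ y := by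
  set dx := degAd L₀ x
  set dy := degAd L₀ y
  have hvx := adOp_iterate_degAd_succ hx
  have hvy := adOp_iterate_degAd_succ hy
  -- in the Leibniz expansion of `ad^[dx + dy + r] (x * y)` only `(i, j) = (dx, dy)` can survive
  have hterm : ∀ r, ∀ ij ∈ antidiagonal (dx + dy + r), ij ≠ (dx, dy) →
      (adOp L₀ L₀)^[ij.1] x * (adOp L₀ L₀)^[ij.2] y = 0 := by
    rintro r ⟨i, j⟩ hij hne
    rw [HasAntidiagonal.mem_antidiagonal] at hij
    rcases le_or_gt i dx with hi | hi
    · rw [adOp_iterate_eq_zero_of_le hvy (by grind), mul_zero]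
    · rw [adOp_iterate_eq_zero_of_le hvx hi, zero_mul]
  refine degAd_eq_of_adOp_iterate ?_ ?_
  · rw [adOp_iterate_mul]
    refine sum_eq_zero fun ij hij => ?_
    rw [hterm 1 ij hij (by rintro rfl; simp at hij), smul_zero]
  · rw [adOp_iterate_mul, ← add_zero (dx + dy), sum_eq_single (dx, dy)
      (fun ij hij hne => by rw [hterm 0 ij hij hne, smul_zero]) (by simp), nsmul_eq_mul]
    exact mul_ne_zero (Nat.cast_ne_zero.2 (Nat.choose_pos (by omega)).ne')
      (mul_ne_zero (adOp_iterate_degAd_ne_zero hx0) (adOp_iterate_degAd_ne_zero hy0))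

end AdDegree

/-- Hypotheses under which `degAd L₀` on `B` extends to the left fractions `s⁻¹ b`, `s ∈ S`. -/
structure DegreeSetting {A : Type*} [Ring A] (B : Subring A) (S : Set A) (L₀ : A) : Prop where
  subset : S ⊆ B
  zero_notMem : (0 : A) ∉ S
  mul_mem : ∀ s ∈ S, ∀ t ∈ S, s * t ∈ S
  comm : ∀ s ∈ S, ∀ t ∈ S, s * t = t * s
  exists_left : ∀ a : A, ∃ s ∈ S, s * a ∈ B
  exists_right : ∀ a : A, ∃ s ∈ S, a * s ∈ B
  nilpotent : ∀ b ∈ B, ∃ n : ℕ, (adOp L₀ L₀)^[n] b = 0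

/-- The degree `deg b - deg s` of the left fraction `a = s⁻¹ b`, for a choice of such `s ∈ S`
(the choice does not matter by `DegreeSetting.degFrac_eq`); junk `0` when there is none. -/
noncomputable def degFrac {A : Type*} [Ring A] (B : Subring A) (S : Set A) (L₀ a : A) : ℤ :=
  open Classical in
  if h : ∃ s ∈ S, s * a ∈ B then degAd L₀ (h.choose * a) - degAd L₀ h.choose else 0

namespace DegreeSetting

variable {A : Type*} [Ring A] {B : Subring A} {S : Set A} {L₀ : A}
  {a b s t : A}

theorem ne_zero (hS : DegreeSetting B S L₀) (hs : s ∈ S) : s ≠ 0 :=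
  fun h => hS.zero_notMem (h ▸ hs)

variable [IsDomain A] [CharZero A]

theorem degAd_mul (hS : DegreeSetting B S L₀) (ha : a ∈ B) (hb : b ∈ B) (ha0 : a ≠ 0)
    (hb0 : b ≠ 0) : degAd L₀ (a * b) = degAd L₀ a + degAd L₀ b :=
  _root_.degAd_mul ha0 hb0 (hS.nilpotent a ha) (hS.nilpotent b hb)

theorem degFrac_eq (hS : DegreeSetting B S L₀) (ha : a ≠ 0) (hs : s ∈ S) (ht : t ∈ S)
    (h : s * a * t ∈ B) : degFrac B S L₀ a = degAd L₀ (s * a * t) - degAd L₀ s - degAd L₀ t := by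
  have hex := hS.exists_left a
  rw [degFrac, dif_pos hex]
  obtain ⟨hu, hua⟩ := hex.choose_spec
  set u := hex.choose
  have hcross : u * (s * a * t) = s * (u * a) * t := by
    rw [← mul_assoc, ← mul_assoc, hS.comm u hu s hs, mul_assoc s]
  have key := congrArg (degAd L₀) hcross
  rw [hS.degAd_mul (hS.subset hu) h (hS.ne_zero hu) (mul_ne_zero (mul_ne_zero (hS.ne_zero hs) ha)
      (hS.ne_zero ht)),
    hS.degAd_mul (B.mul_mem (hS.subset hs) hua) (hS.subset ht)
      (mul_ne_zero (hS.ne_zero hs) (mul_ne_zero (hS.ne_zero hu) ha)) (hS.ne_zero ht),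
    hS.degAd_mul (hS.subset hs) hua (hS.ne_zero hs) (mul_ne_zero (hS.ne_zero hu) ha)] at key
  omega

theorem degFrac_eq_left (hS : DegreeSetting B S L₀) (ha : a ≠ 0) (hs : s ∈ S) (h : s * a ∈ B) :
    degFrac B S L₀ a = degAd L₀ (s * a) - degAd L₀ s := by
  rw [hS.degFrac_eq ha hs hs (B.mul_mem h (hS.subset hs)),
    hS.degAd_mul h (hS.subset hs) (mul_ne_zero (hS.ne_zero hs) ha) (hS.ne_zero hs)]
  omega

theorem degFrac_eq_right (hS : DegreeSetting B S L₀) (ha : a ≠ 0) (ht : t ∈ S) (h : a * t ∈ B) :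
    degFrac B S L₀ a = degAd L₀ (a * t) - degAd L₀ t := by
  rw [hS.degFrac_eq ha ht ht (by rw [mul_assoc]; exact B.mul_mem (hS.subset ht) h), mul_assoc,
    hS.degAd_mul (hS.subset ht) h (hS.ne_zero ht) (mul_ne_zero ha (hS.ne_zero ht))]
  omega

theorem degFrac_of_mem (hS : DegreeSetting B S L₀) (hb : b ∈ B) (hb0 : b ≠ 0) :
    degFrac B S L₀ b = degAd L₀ b := by
  obtain ⟨s, hs, -⟩ := hS.exists_left b
  rw [hS.degFrac_eq_left hb0 hs (B.mul_mem (hS.subset hs) hb),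
    hS.degAd_mul (hS.subset hs) hb (hS.ne_zero hs) hb0]
  omega

theorem degFrac_mul (hS : DegreeSetting B S L₀) (ha : a ≠ 0) (hb : b ≠ 0) :
    degFrac B S L₀ (a * b) = degFrac B S L₀ a + degFrac B S L₀ b := by
  obtain ⟨s, hs, hsa⟩ := hS.exists_left a
  obtain ⟨t, ht, hbt⟩ := hS.exists_right b
  have hprod : s * (a * b) * t = (s * a) * (b * t) := by simp only [mul_assoc]
  rw [hS.degFrac_eq (mul_ne_zero ha hb) hs ht (hprod ▸ B.mul_mem hsa hbt), hprod,
    hS.degAd_mul hsa hbt (mul_ne_zero (hS.ne_zero hs) ha) (mul_ne_zero hb (hS.ne_zero ht)),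
    hS.degFrac_eq_left ha hs hsa, hS.degFrac_eq_right hb ht hbt]
  omega

theorem degFrac_one (hS : DegreeSetting B S L₀) : degFrac B S L₀ 1 = 0 := by
  have h := hS.degFrac_mul (a := 1) (b := 1) one_ne_zero one_ne_zero
  rw [mul_one] at h
  omega

theorem degFrac_pow (hS : DegreeSetting B S L₀) (ha : a ≠ 0) (n : ℕ) :
    degFrac B S L₀ (a ^ n) = n * degFrac B S L₀ a := by
  induction n with
  | zero => simp [hS.degFrac_one]
  | succ n ih =>
    rw [pow_succ, hS.degFrac_mul (pow_ne_zero n ha) ha, ih]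
    push_cast
    ring

theorem degFrac_neg (hS : DegreeSetting B S L₀) (ha : a ≠ 0) :
    degFrac B S L₀ (-a) = degFrac B S L₀ a := by
  obtain ⟨s, hs, hsa⟩ := hS.exists_left a
  rw [hS.degFrac_eq_left ha hs hsa, hS.degFrac_eq_left (neg_ne_zero.2 ha) hs
    (by rw [mul_neg]; exact neg_mem hsa), mul_neg, degAd_neg]

theorem degFrac_sub_le (hS : DegreeSetting B S L₀) (ha : a ≠ 0) (hb : b ≠ 0) (hab : a - b ≠ 0) :
    degFrac B S L₀ (a - b) ≤ max (degFrac B S L₀ a) (degFrac B S L₀ b) := by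
  obtain ⟨u, hu, hua⟩ := hS.exists_left a
  obtain ⟨v, hv, hvb⟩ := hS.exists_left b
  -- `u * v` is a common left denominator since `S` is commutative
  have hwa : u * v * a ∈ B := by
    rw [hS.comm u hu v hv, mul_assoc]; exact B.mul_mem (hS.subset hv) hua
  have hwb : u * v * b ∈ B := by rw [mul_assoc]; exact B.mul_mem (hS.subset hu) hvb
  have hw := hS.mul_mem u hu v hv
  rw [hS.degFrac_eq_left hab hw (by rw [mul_sub]; exact sub_mem hwa hwb),
    hS.degFrac_eq_left ha hw hwa, hS.degFrac_eq_left hb hw hwb, mul_sub]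
  have := degAd_sub_le (hS.nilpotent _ hwa) (hS.nilpotent _ hwb)
  omega

theorem degFrac_sub_lt_zero_of_cond2 {k : Type*} [CommRing k] [Algebra k A]
    {B : Subalgebra k A} {L : A} (hS : DegreeSetting B.toSubring S L₀) (h : cond2 B S L₀ L)
    (hL : L ≠ L₀) : degFrac B.toSubring S L₀ (L - L₀) < 0 := by
  obtain ⟨s, hs, hsB, hs0, hdeg⟩ := h.resolve_left hL
  rw [hS.degFrac_eq_left (right_ne_zero_of_mul hs0) hs hsB]
  omega

theorem degFrac_sub_lt_zero {k : Type*} [CommRing k] [Algebra k A]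
    {B : Subalgebra k A} {L₁ L₂ : A} (hS : DegreeSetting B.toSubring S L₀)
    (h₁ : cond2 B S L₀ L₁) (h₂ : cond2 B S L₀ L₂) (hne : L₁ ≠ L₂) :
    degFrac B.toSubring S L₀ (L₁ - L₂) < 0 := by
  by_cases hL₁ : L₁ = L₀
  · have hL₂ : L₂ ≠ L₀ := hL₁ ▸ hne.symm
    rw [hL₁, ← neg_sub, hS.degFrac_neg (sub_ne_zero.2 hL₂)]
    exact hS.degFrac_sub_lt_zero_of_cond2 h₂ hL₂
  by_cases hL₂ : L₂ = L₀
  · rw [hL₂]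
    exact hS.degFrac_sub_lt_zero_of_cond2 h₁ hL₁
  have hsplit : L₁ - L₂ = (L₁ - L₀) - (L₂ - L₀) := by abel
  rw [hsplit]
  refine (hS.degFrac_sub_le (sub_ne_zero.2 hL₁) (sub_ne_zero.2 hL₂)
    (hsplit ▸ sub_ne_zero.2 hne)).trans_lt ?_
  exact max_lt (hS.degFrac_sub_lt_zero_of_cond2 h₁ hL₁) (hS.degFrac_sub_lt_zero_of_cond2 h₂ hL₂)

theorem not_forall_mul_pow_mul_mem (hS : DegreeSetting B S L₀) (ha : a ≠ 0)
    (hneg : degFrac B S L₀ a < 0) (hs : s ∈ S) : ¬ ∀ n : ℕ, s * a ^ n * s ∈ B := by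
  intro hmem
  set n := 2 * degAd L₀ s + 1
  have hs0 := hS.ne_zero hs
  have hsan : s * a ^ n ≠ 0 := mul_ne_zero hs0 (pow_ne_zero n ha)
  have hdeg := hS.degFrac_of_mem (hmem n) (mul_ne_zero hsan hs0)
  rw [hS.degFrac_mul hsan hs0, hS.degFrac_mul hs0 (pow_ne_zero n ha), hS.degFrac_pow ha,
    hS.degFrac_of_mem (hS.subset hs) hs0] at hdeg
  have : (n : ℤ) * degFrac B S L₀ a ≤ n * -1 :=
    mul_le_mul_of_nonneg_left (by omega) (Int.natCast_nonneg n)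
  omega

end DegreeSetting

theorem isSubspace.sub_mem {k A M : Type*} [CommRing k] [Ring A] [Algebra k A]
    [AddCommGroup M] [Module A M] {U : Set M} (hU : isSubspace k A U) {u v : M}
    (hu : u ∈ U) (hv : v ∈ U) : u - v ∈ U := by
  have hnegv := hU.2.2 (-1) v hv
  rw [map_neg, map_one, neg_smul, one_smul] at hnegv
  rw [sub_eq_add_neg]
  exact hU.2.1 u hu (-v) hnegv

theorem stmt6_general
    {k A M : Type*} [Field k] [CharZero k] [Ring A] [IsDomain A] [Algebra k A]
    [AddCommGroup M] [Module A M]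
    (B R : Subalgebra k A) (hRB : R ≤ B)
    (hRcomm : ∀ x ∈ R, ∀ y ∈ R, x * y = y * x)
    (S : Set A) (hSR : S ⊆ (R : Set A)) (hS0 : (0 : A) ∉ S)
    (hSmul : ∀ s ∈ S, ∀ t ∈ S, s * t ∈ S)
    (hleft : ∀ a : A, ∃ s ∈ S, s * a ∈ B)
    (hright : ∀ a : A, ∃ s ∈ S, a * s ∈ B)
    (U₀ : Set M)
    (hB : ∀ a : A, a ∈ B ↔ ∀ u ∈ U₀, a • u ∈ U₀)
    (L₀ : A)
    (hnil : ∀ b ∈ B, ∃ n : ℕ, (adOp L₀ L₀)^[n] b = 0)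
    (U : Set M) (hU : isSubspace k A U)
    (s : A) (hs : s ∈ S)
    (hsU₀ : ∀ u ∈ U₀, s • u ∈ U) (hsU : ∀ u ∈ U, s • u ∈ U₀)
    (L₁ L₂ : A) (h₁ : cond2 B S L₀ L₁) (h₂ : cond2 B S L₀ L₂)
    (hL₁U : ∀ u ∈ U, L₁ • u ∈ U) (hL₂U : ∀ u ∈ U, L₂ • u ∈ U) :
    L₁ = L₂ := by
  have : CharZero A := charZero_of_injective_algebraMap (algebraMap k A).injective
  have hS : DegreeSetting B.toSubring S L₀ :=
    { subset := fun x hx => hRB (hSR hx)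
      zero_notMem := hS0
      mul_mem := hSmul
      comm := fun x hx y hy => hRcomm x (hSR hx) y (hSR hy)
      exists_left := hleft
      exists_right := hright
      nilpotent := hnil }
  by_contra hne
  have hDU : Set.MapsTo ((L₁ - L₂) • ·) U U := fun u hu => by
    simpa only [sub_smul] using hU.sub_mem (hL₁U u hu) (hL₂U u hu)
  refine hS.not_forall_mul_pow_mul_mem (sub_ne_zero.2 hne) (hS.degFrac_sub_lt_zero h₁ h₂ hne) hs
    fun n => (hB _).2 fun u hu => ?_
  rw [mul_smul, mul_smul, ← smul_iterate_apply]
  exact hsU _ (hDU.iterate n (hsU₀ u hu))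

/-- Uniqueness claim of Theorem 4.4: given a `k`-subspace `U` satisfying condition (1b),
there is at most one operator satisfying conditions (1a) and (2). -/
theorem stmt6
    {k A M : Type*} [Field k] [CharZero k] [Ring A] [IsDomain A] [Algebra k A]
    [AddCommGroup M] [Module A M]
    (B R : Subalgebra k A) (hRB : R ≤ B)
    (hRcomm : ∀ x ∈ R, ∀ y ∈ R, x * y = y * x)
    (S : Set A) (hSR : S ⊆ (R : Set A)) (hS0 : (0 : A) ∉ S) (hS1 : (1 : A) ∈ S)
    (hSmul : ∀ s ∈ S, ∀ t ∈ S, s * t ∈ S)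
    (hSunit : ∀ s ∈ S, IsUnit s)
    (hleft : ∀ a : A, ∃ s ∈ S, s * a ∈ B)
    (hright : ∀ a : A, ∃ s ∈ S, a * s ∈ B)
    (U₀ : Set M) (hU₀0 : (0 : M) ∈ U₀)
    (hU₀add : ∀ u ∈ U₀, ∀ v ∈ U₀, u + v ∈ U₀)
    (hU₀neg : ∀ u ∈ U₀, -u ∈ U₀)
    (hU₀R : ∀ r ∈ (R : Set A), ∀ u ∈ U₀, r • u ∈ U₀)
    (hB : ∀ a : A, a ∈ B ↔ ∀ u ∈ U₀, a • u ∈ U₀)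
    (L₀ : A) (hL₀ : L₀ ∈ B)
    (hnil : ∀ b ∈ B, ∃ n : ℕ, (adOp L₀ L₀)^[n] b = 0)
    (U : Set M) (hU : isSubspace k A U)
    (s : A) (hs : s ∈ S)
    (hsU₀ : ∀ u ∈ U₀, s • u ∈ U) (hsU : ∀ u ∈ U, s • u ∈ U₀)
    (L₁ L₂ : A) (h₁ : cond2 B S L₀ L₁) (h₂ : cond2 B S L₀ L₂)
    (hL₁U : ∀ u ∈ U, L₁ • u ∈ U) (hL₂U : ∀ u ∈ U, L₂ • u ∈ U) :
    L₁ = L₂ :=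
  stmt6_general B R hRB hRcomm S hSR hS0 hSmul hleft hright U₀ hB L₀ hnil U hU s hs hsU₀ hsU L₁ L₂
    h₁ h₂ hL₁U hL₂U
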